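/- For every integer $k \ge 0$, the graph $H_k$ from the Blanche-Descartes-style construction is not $(0,0,k)$-colorable: start with seven disjoint 7-cycles $D_1,\ldots,D_7$; for every choice of seven vertices $v_1 \in D_1, \ldots, v_7 \in D_7$, perform the operation 'add a disjoint new 7-cycle together with a perfect matching from its seven vertices to $\{v_1,\ldots,v_7\}$' exactly $7k+1$ times. Then there is no partition of $V(H_k)$ into three parts where the first two are independent sets and the third induces a subgraph of maximum degree at most $k$. -/

import Mathlib

/-- A graph `G` is `(d 0, …, d (k-1))`-colorable if its vertex set can be partitioned
into `k` parts such that part `i` induces a subgraph of maximum degree at most `d i`. -/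
def ImpColorable {V : Type*} {k : ℕ} (G : SimpleGraph V) (d : Fin k → ℕ) : Prop :=
  ∃ f : V → Fin k, ∀ v : V, {u | G.Adj v u ∧ f u = f v}.ncard ≤ d (f v)

/-- Vertices of `H_k`: seven disjoint base 7-cycles `D_i` (indexed by `i : ZMod 7`, with
positions in `ZMod 7`), together with, for every choice `v : Fin 7 → ZMod 7`... here
`v : ZMod 7 → ZMod 7` picks one vertex `v i` in each `D_i`, and for each such choice there
are `7k+1` added 7-cycles, each matched to the chosen vertices. -/
abbrev HkVert (k : ℕ) := (ZMod 7 × ZMod 7) ⊕ ((ZMod 7 → ZMod 7) × Fin (7 * k + 1) × ZMod 7)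

/-- The Blanche-Descartes-style graph `H_k`: seven disjoint 7-cycles `D_i`, and for every
choice of one vertex `v i` from each `D_i`, `7k+1` added disjoint 7-cycles, the `s`-th
vertex of each being matched to the vertex `v s` of `D_s`. -/
def HkGraph (k : ℕ) : SimpleGraph (HkVert k) :=
  SimpleGraph.fromRel (fun x y =>
    match x, y with
    | .inl (i, p), .inl (i', p') => i = i' ∧ p' = p + 1
    | .inr (v, t, s), .inr (v', t', s') => v = v' ∧ t = t' ∧ s' = s + 1
    | .inr (v, _, s), .inl (i, p) => i = s ∧ p = v s
    | _, _ => False)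

set_option maxRecDepth 10000 in
private lemma zmod7_two_color : ∀ g : ZMod 7 → Fin 2, ∃ p, g (p + 1) = g p := by decide

/-- For every `k ≥ 0`, the graph `H_k` is not `(0,0,k)`-colorable. -/
theorem HkGraph_not_00k_colorable (k : ℕ) :
    ¬ ImpColorable (HkGraph k) ![0, 0, k] := by
  rintro ⟨f, hf⟩
  have htri : ∀ x : Fin 3, x = 0 ∨ x = 1 ∨ x = 2 := by decide
  -- adjacent vertices with equal color must have color 2
  have key : ∀ a b : HkVert k, (HkGraph k).Adj a b → f b = f a → f a = 2 := by
    intro a b hab hfab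
    rcases htri (f a) with h | h | h
    · exfalso
      have hle := hf a
      rw [h] at hle
      simp only [Matrix.cons_val_zero, Nat.le_zero] at hle
      rw [Set.ncard_eq_zero (Set.toFinite _)] at hle
      have hmem : b ∈ {u | (HkGraph k).Adj a u ∧ f u = 0} := ⟨hab, hfab.trans h⟩
      rw [hle] at hmem
      exact hmem
    · exfalso
      have hle := hf a
      rw [h] at hle
      simp only [Matrix.cons_val_one, Matrix.head_cons, Matrix.cons_val_zero, Nat.le_zero] at hle
      rw [Set.ncard_eq_zero (Set.toFinite _)] at hle
      have hmem : b ∈ {u | (HkGraph k).Adj a u ∧ f u = 1} := ⟨hab, hfab.trans h⟩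
      rw [hle] at hmem
      exact hmem
    · exact h
  -- every 7-cycle contains a vertex of color 2
  have cyc2 : ∀ c : ZMod 7 → HkVert k,
      (∀ p, (HkGraph k).Adj (c p) (c (p + 1))) → ∃ p, f (c p) = 2 := by
    intro c hc
    by_contra h
    push_neg at h
    have hdiff : ∀ p, f (c (p + 1)) ≠ f (c p) := fun p heq => h p (key _ _ (hc p) heq)
    have hval : ∀ p, f (c p) = 0 ∨ f (c p) = 1 := by
      intro p
      rcases htri (f (c p)) with h0 | h1 | h2
      · exact Or.inl h0
      · exact Or.inr h1
      · exact absurd h2 (h p)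
    obtain ⟨p, hp⟩ := zmod7_two_color (fun p => if f (c p) = 0 then 0 else 1)
    apply hdiff p
    rcases hval p with h0 | h0 <;> rcases hval (p + 1) with h1 | h1
    · exact h1.trans h0.symm
    · exfalso; rw [h0, h1] at hp; simp at hp
    · exfalso; rw [h0, h1] at hp; simp at hp
    · exact h1.trans h0.symm
  -- adjacency in base cycles
  have adjbase : ∀ i p : ZMod 7,
      (HkGraph k).Adj (.inl (i, p)) (.inl (i, p + 1)) := by
    intro i p
    rw [HkGraph, SimpleGraph.fromRel_adj]
    refine ⟨?_, Or.inl ⟨rfl, rfl⟩⟩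
    intro hcon
    have hp : p = p + 1 := congrArg Prod.snd (Sum.inl.inj hcon)
    rw [left_eq_add] at hp
    exact absurd hp (by decide)
  -- choose a color-2 vertex in each base cycle
  have base2 : ∀ i : ZMod 7, ∃ p : ZMod 7, f (.inl (i, p)) = 2 :=
    fun i => cyc2 (fun p => .inl (i, p)) (fun p => adjbase i p)
  choose v hv using base2
  -- adjacency in the added cycles for this choice v
  have adjinner : ∀ (t : Fin (7 * k + 1)) (p : ZMod 7),
      (HkGraph k).Adj (.inr (v, t, p)) (.inr (v, t, p + 1)) := by
    intro t p
    rw [HkGraph, SimpleGraph.fromRel_adj]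
    refine ⟨?_, Or.inl ⟨rfl, rfl, rfl⟩⟩
    intro hcon
    have hp : p = p + 1 := congrArg (Prod.snd ∘ Prod.snd) (Sum.inr.inj hcon)
    rw [left_eq_add] at hp
    exact absurd hp (by decide)
  -- choose a color-2 vertex in each added cycle
  have inner2 : ∀ t : Fin (7 * k + 1), ∃ p : ZMod 7, f (.inr (v, t, p)) = 2 :=
    fun t => cyc2 (fun p => .inr (v, t, p)) (fun p => adjinner t p)
  choose s hs using inner2
  -- pigeonhole: some x is hit by more than k values of t
  obtain ⟨x, hx⟩ :=
    Fintype.exists_lt_card_fiber_of_mul_lt_card (f := s)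
      (by simp only [ZMod.card, Fintype.card_fin]; omega : Fintype.card (ZMod 7) * k < Fintype.card (Fin (7 * k + 1)))
  -- the vertex inl (x, v x) has more than k color-2 neighbors
  have hle := hf (.inl (x, v x))
  have hk2 : ![0, 0, k] (f (.inl (x, v x))) = k := by rw [hv x]; rfl
  rw [hk2] at hle
  have hsub : ↑((Finset.univ.filter fun t => s t = x).image
      fun t : Fin (7 * k + 1) => (.inr (v, t, x) : HkVert k)) ⊆
      {u | (HkGraph k).Adj (.inl (x, v x)) u ∧ f u = f (.inl (x, v x))} := by
    intro u hu
    simp only [Finset.coe_image, Set.mem_image, Finset.mem_coe, Finset.mem_filter,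
      Finset.mem_univ, true_and] at hu
    obtain ⟨t, hst, rfl⟩ := hu
    constructor
    · rw [HkGraph, SimpleGraph.fromRel_adj]
      exact ⟨by simp, Or.inr ⟨rfl, rfl⟩⟩
    · rw [hv x, ← hst]
      exact hs t
  have hcard : ((Finset.univ.filter fun t => s t = x).image
      fun t : Fin (7 * k + 1) => (.inr (v, t, x) : HkVert k)).card
      = (Finset.univ.filter fun t => s t = x).card := by
    apply Finset.card_image_of_injective
    intro a b hab
    exact congrArg (Prod.fst ∘ Prod.snd) (Sum.inr.inj hab)
  have hfin : (Finset.univ.filter fun t => s t = x).card ≤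
      {u | (HkGraph k).Adj (.inl (x, v x)) u ∧ f u = f (.inl (x, v x))}.ncard := by
    rw [← hcard, ← Set.ncard_coe_finset]
    exact Set.ncard_le_ncard hsub (Set.toFinite _)
  omega
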